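/- Let Q be fixed and k a positive integer. For each fraction γ_i in F_Q, ν_k(γ_i) = χ(2k−1)·K_{k−1}(−ν_2(γ_i), ν_2(γ_{i+1}), ..., (−1)^{k−1}ν_2(γ_{i+k−2})), where χ(n) is the Kronecker symbol (n/2), i.e., χ(n) = 0 if n is even, 1 if n ≡ ±1 (mod 8), and −1 if n ≡ ±3 (mod 8). -/

import Mathlib

open MeasureTheory

/-- The Farey fractions of order `Q`, as a set of rationals in `(0,1]`
with denominator at most `Q` (rationals are automatically in lowest terms). -/
def fareySet (Q : ℕ) : Set ℚ := {x | 0 < x ∧ x ≤ 1 ∧ x.den ≤ Q}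

/-- `IsFarey Q N p q` asserts that `i ↦ p i / q i` (for `1 ≤ i ≤ N`) enumerates the
Farey fractions of order `Q` in increasing order, in lowest terms, extended to all
integer indices by the periodicity `γ_{i+N} = γ_i + 1`. -/
structure IsFarey (Q N : ℕ) (p q : ℤ → ℤ) : Prop where
  qpos : ∀ i : ℤ, 0 < q i
  coprime : ∀ i : ℤ, Int.gcd (p i) (q i) = 1
  mono : ∀ i j : ℤ, i < j → (p i : ℚ) / (q i) < (p j : ℚ) / (q j)
  mem : ∀ i : ℤ, 1 ≤ i → i ≤ (N : ℤ) → ((p i : ℚ) / (q i)) ∈ fareySet Q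
  surj : ∀ x ∈ fareySet Q, ∃ i : ℤ, 1 ≤ i ∧ i ≤ (N : ℤ) ∧ (p i : ℚ) / (q i) = x
  period_p : ∀ i : ℤ, p (i + N) = p i + q i
  period_q : ∀ i : ℤ, q (i + N) = q i

/-- The `k`-index `ν_k(γ_i) = p_{i+k-1} q_{i-1} - p_{i-1} q_{i+k-1}`. -/
def nuk (p q : ℤ → ℤ) (k : ℕ) (i : ℤ) : ℤ :=
  p (i + k - 1) * q (i - 1) - p (i - 1) * q (i + k - 1)

/-- The convergent (continuant) polynomials, as functions of an assignment of integer
values to the variables `x_1, x_2, …` : `K_0 = 1`, `K_1 = x_1`,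
`K_n = x_n K_{n-1} + K_{n-2}`. -/
def convK : ℕ → (ℕ → ℤ) → ℤ
  | 0, _ => 1
  | 1, x => x 1
  | (n + 2), x => x (n + 2) * convK (n + 1) x + convK n x

/-- The Kronecker symbol `(n/2)`. -/
def kron2 (n : ℤ) : ℤ :=
  if n % 2 = 0 then 0 else if n % 8 = 1 ∨ n % 8 = 7 then 1 else -1

/-!
Consecutive Farey fractions are unimodular neighbours: `p (j+1) * q j - p j * q (j+1) = 1`.
Hence the vectors `v_j = (p j, q j)` satisfy `ν₂(γ_j) • v_j = v_{j-1} + v_{j+1}`, and expanding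
`ν_{n+2}(γ_i)` along this gives `ν_{n+2} = ν₂(γ_{i+n}) ν_{n+1} - ν_n` with `ν₀ = 0`, `ν₁ = 1`.
Twisting the arguments by `(-1)^j` turns this into the continuant recurrence up to a sign
`s_n` with `s_{n+2} = -s_n` and `s_{n+1} = (-1)^{n+1} s_n`, which is `χ(2n+1)`.
-/

theorem kron2_add_four (m : ℤ) : kron2 (m + 4) = -kron2 m := by
  unfold kron2; split_ifs <;> omega

theorem kron2_two_mul_add_three (n : ℕ) :
    kron2 (2 * n + 3) = (-1) ^ (n + 1) * kron2 (2 * n + 1) := by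
  rcases Nat.even_or_odd (n + 1) with h | h
  · rw [h.neg_one_pow, one_mul]
    obtain ⟨t, ht⟩ := h
    unfold kron2; split_ifs <;> omega
  · rw [h.neg_one_pow, neg_one_mul]
    obtain ⟨t, ht⟩ := h
    unfold kron2; split_ifs <;> omega

theorem eq_kron2_mul_convK_of_recurrence {E x : ℕ → ℤ} (h0 : E 0 = 0) (h1 : E 1 = 1)
    (hrec : ∀ n, E (n + 2) = (-1) ^ (n + 1) * x (n + 1) * E (n + 1) - E n) (n : ℕ) :
    E (n + 1) = kron2 (2 * n + 1) * convK n x := by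
  induction n using Nat.twoStepInduction with
  | zero => simp [h1, kron2, convK]
  | one => simp [hrec 0, h0, h1, kron2, convK]
  | more n ih₀ ih₁ =>
    have hsign : ((-1 : ℤ) ^ n) ^ 2 = 1 := by rw [← pow_mul]; exact Even.neg_one_pow ⟨n, by ring⟩
    rw [hrec, convK, ih₀, ih₁]
    push_cast
    rw [show 2 * ((n : ℤ) + 1) + 1 = 2 * n + 3 by ring,
      show 2 * ((n : ℤ) + 2) + 1 = 2 * n + 1 + 4 by ring, kron2_add_four, kron2_two_mul_add_three]
    linear_combination (-x (n + 2) * kron2 (2 * n + 1) * convK (n + 1) x) * hsign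

theorem nuk_zero (p q : ℤ → ℤ) (i : ℤ) : nuk p q 0 i = 0 := by
  simp [nuk]

theorem nuk_succ (p q : ℤ → ℤ) (k : ℕ) (i : ℤ) :
    nuk p q (k + 1) i = p (i + k) * q (i - 1) - p (i - 1) * q (i + k) := by
  rw [nuk, Nat.cast_succ, ← add_assoc, add_sub_cancel_right]

theorem nuk_two (p q : ℤ → ℤ) (j : ℤ) :
    nuk p q 2 j = p (j + 1) * q (j - 1) - p (j - 1) * q (j + 1) := by
  rw [nuk_succ, Nat.cast_one]

section Unimodular

variable {p q : ℤ → ℤ} (hdet : ∀ j, p (j + 1) * q j - p j * q (j + 1) = 1)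
include hdet

theorem nuk_one (i : ℤ) : nuk p q 1 i = 1 := by
  simpa [nuk_succ] using hdet (i - 1)

theorem nuk_two_mul_num (j : ℤ) : nuk p q 2 j * p j = p (j - 1) + p (j + 1) := by
  have hprev := hdet (j - 1)
  rw [sub_add_cancel] at hprev
  rw [nuk_two]
  linear_combination p (j + 1) * hprev + p (j - 1) * hdet j

theorem nuk_two_mul_den (j : ℤ) : nuk p q 2 j * q j = q (j - 1) + q (j + 1) := by
  have hprev := hdet (j - 1)
  rw [sub_add_cancel] at hprev
  rw [nuk_two]
  linear_combination q (j + 1) * hprev + q (j - 1) * hdet j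

theorem nuk_add_two (n : ℕ) (i : ℤ) :
    nuk p q (n + 2) i = nuk p q 2 (i + n) * nuk p q (n + 1) i - nuk p q n i := by
  have hp := nuk_two_mul_num hdet (i + n)
  have hq := nuk_two_mul_den hdet (i + n)
  rw [nuk_two] at hp hq
  rw [nuk_two, nuk_succ p q (n + 1), nuk_succ p q n, nuk, Nat.cast_succ, ← add_assoc]
  linear_combination p (i - 1) * hq - q (i - 1) * hp

theorem nuk_succ_eq_kron2_mul_convK (n : ℕ) (i : ℤ) :
    nuk p q (n + 1) i =
      kron2 (2 * n + 1) * convK n (fun j => (-1) ^ j * nuk p q 2 (i + j - 1)) := by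
  refine eq_kron2_mul_convK_of_recurrence (E := fun m => nuk p q m i) (nuk_zero p q i)
    (nuk_one hdet i) (fun n => ?_) n
  rw [nuk_add_two hdet, ← mul_assoc, ← mul_pow]
  push_cast
  ring_nf

end Unimodular

theorem IsCoprime.exists_mul_sub_mul_eq_one {a b : ℤ} (h : IsCoprime a b) (hb : 0 < b) (Q : ℤ) :
    ∃ u v, b * u - a * v = 1 ∧ Q - b < v ∧ v ≤ Q := by
  obtain ⟨x, y, hxy⟩ := h
  have hdiv := Int.mul_ediv_add_emod (Q + x) b
  have hnonneg := Int.emod_nonneg (Q + x) hb.ne'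
  have hlt := Int.emod_lt_of_pos (Q + x) hb
  exact ⟨y + a * ((Q + x) / b), -x + b * ((Q + x) / b), by linear_combination hxy,
    by linarith, by linarith⟩

/-- Unimodularity of Farey neighbours: the partner `u / v` of `a / b` with `b u - a v = 1` and
`Q - b < v ≤ Q` is a Farey fraction to the right of `a / b`, and it must be `c / d` since
otherwise `d ≥ b + v > Q`. -/
theorem mul_sub_mul_eq_one_of_adjacent {Q a b c d : ℤ} (ha : 0 ≤ a) (hb : 0 < b) (hbQ : b ≤ Q)
    (hd : 0 < d) (hc : c ≤ d) (hdQ : d ≤ Q) (hab : IsCoprime a b) (hcd : IsCoprime c d)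
    (hlt : a * d < c * b)
    (hadj : ∀ u v, 0 < u → u ≤ v → v ≤ Q → IsCoprime u v → a * v < u * b → c * v ≤ u * d) :
    c * b - a * d = 1 := by
  obtain ⟨u, v, huv, hQv, hvQ⟩ := hab.exists_mul_sub_mul_eq_one hb Q
  have hv : 0 < v := by linarith
  have hlt' : a < b := by nlinarith
  have hu : 0 < u := by nlinarith
  have hle : u ≤ v := by nlinarith
  have hcv := hadj u v hu hle hvQ ⟨b, -a, by linear_combination huv⟩ (by linarith)
  obtain ⟨D, hD⟩ : ∃ D, D = c * b - a * d := ⟨_, rfl⟩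
  have hDpos : 0 < D := by linarith
  have hdecomp : d = b * (d * u - c * v) + v * D := by linear_combination -d * huv - v * hD
  have hcross : d * u = c * v := by
    by_contra hne
    have hpos : 0 < d * u - c * v := lt_of_le_of_ne (by linarith [mul_comm u d]) (by omega)
    nlinarith
  have hdD : d = v * D := by rw [hcross, sub_self, mul_zero, zero_add] at hdecomp; exact hdecomp
  have hcD : c = u * D := by
    refine mul_left_cancel₀ hv.ne' ?_
    linear_combination -hcross + u * hdD
  have hunit := hcd.isUnit_of_dvd' (Dvd.intro_left u hcD.symm) (Dvd.intro_left v hdD.symm)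
  rcases Int.isUnit_iff.mp hunit with h | h
  · rw [← hD, h]
  · omega

theorem mem_fareySet_iff {Q : ℕ} {u v : ℤ} (hv : 0 < v) (huv : IsCoprime u v) :
    (u / v : ℚ) ∈ fareySet Q ↔ 0 < u ∧ u ≤ v ∧ v ≤ Q := by
  have hv' : (0 : ℚ) < v := by exact_mod_cast hv
  have hden : (((u / v : ℚ)).den : ℤ) = v :=
    Rat.den_div_eq_of_coprime hv (Int.isCoprime_iff_gcd_eq_one.mp huv)
  simp only [fareySet, Set.mem_ofPred_eq, div_pos_iff_of_pos_right hv', div_le_one hv']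
  rw [← Int.ofNat_le (m := (u / v : ℚ).den), hden]
  norm_cast

namespace IsFarey

variable {Q N : ℕ} {p q : ℤ → ℤ} (hF : IsFarey Q N p q)
include hF

theorem strictMono : StrictMono fun i => (p i : ℚ) / q i := hF.mono

theorem isCoprime (i : ℤ) : IsCoprime (p i) (q i) :=
  Int.isCoprime_iff_gcd_eq_one.mpr (hF.coprime i)

theorem bounds {j : ℤ} (hj : 1 ≤ j) (hjN : j ≤ N) : 0 < p j ∧ p j ≤ q j ∧ q j ≤ Q :=
  (mem_fareySet_iff (hF.qpos j) (hF.isCoprime j)).mp (hF.mem j hj hjN)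

theorem N_pos : 0 < N := by
  rcases Nat.eq_zero_or_pos N with rfl | h
  · have := hF.period_q 0
    have := hF.period_p 0
    have := hF.qpos 0
    simp_all
  · exact h

theorem one_le_Q : 1 ≤ Q := by
  have := hF.bounds le_rfl (by exact_mod_cast hF.N_pos)
  omega

theorem num_den_at_N : p N = 1 ∧ q N = 1 := by
  have h1 : (1 : ℚ) ∈ fareySet Q := ⟨one_pos, le_rfl, by simpa using hF.one_le_Q⟩
  obtain ⟨m, -, hmN, hm⟩ := hF.surj 1 h1
  have hN : (p N : ℚ) / q N = 1 :=
    le_antisymm (hF.mem N (by exact_mod_cast hF.N_pos) le_rfl).2.1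
      (hm ▸ hF.strictMono.monotone hmN)
  have hpq : p N = q N := by
    rw [div_eq_one_iff_eq (by exact_mod_cast (hF.qpos N).ne')] at hN
    exact_mod_cast hN
  have hunit : IsUnit (q N) := isCoprime_self.mp (hpq ▸ hF.isCoprime N)
  have hq := hF.qpos N
  rcases Int.isUnit_iff.mp hunit with h | h <;> omega

theorem num_den_at_zero : p 0 = 0 ∧ q 0 = 1 := by
  have hp := hF.period_p 0
  have hq := hF.period_q 0
  rw [zero_add] at hp hq
  have := hF.num_den_at_N
  omega

theorem succ_le_of_lt (j : ℤ) {x : ℚ} (hx : x ∈ fareySet Q) (hlt : (p j : ℚ) / q j < x) :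
    (p (j + 1) : ℚ) / q (j + 1) ≤ x := by
  obtain ⟨m, -, -, rfl⟩ := hF.surj x hx
  exact hF.strictMono.le_iff_le.mpr (hF.strictMono.lt_iff_lt.mp hlt)

theorem det_eq_one_of_nonneg_of_lt {j : ℤ} (hj : 0 ≤ j) (hjN : j < N) :
    p (j + 1) * q j - p j * q (j + 1) = 1 := by
  have hleft : 0 ≤ p j ∧ q j ≤ Q := by
    rcases hj.eq_or_lt with rfl | hj
    · have := hF.num_den_at_zero
      have := hF.one_le_Q
      omega
    · have := hF.bounds hj hjN.le
      omega
  obtain ⟨-, hc, hdQ⟩ := hF.bounds (j := j + 1) (by omega) (by omega)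
  have hqj : (0 : ℚ) < q j := by exact_mod_cast hF.qpos j
  have hqj' : (0 : ℚ) < q (j + 1) := by exact_mod_cast hF.qpos (j + 1)
  refine mul_sub_mul_eq_one_of_adjacent hleft.1 (hF.qpos j) hleft.2 (hF.qpos (j + 1)) hc hdQ
    (hF.isCoprime j) (hF.isCoprime (j + 1)) ?_ ?_
  · have := hF.mono j (j + 1) (lt_add_one j)
    rw [div_lt_div_iff₀ hqj hqj'] at this
    exact_mod_cast this
  · intro u v hu huv hvQ hcop hlt
    have hv : (0 : ℚ) < v := by exact_mod_cast hu.trans_le huv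
    have hx := (mem_fareySet_iff (hu.trans_le huv) hcop).mpr ⟨hu, huv, hvQ⟩
    have := hF.succ_le_of_lt j hx (by rw [div_lt_div_iff₀ hqj hv]; exact_mod_cast hlt)
    rw [div_le_div_iff₀ hqj' hv] at this
    exact_mod_cast this

theorem det_add_N (j : ℤ) :
    p (j + N + 1) * q (j + N) - p (j + N) * q (j + N + 1) = p (j + 1) * q j - p j * q (j + 1) := by
  rw [add_right_comm, hF.period_p, hF.period_q, hF.period_p, hF.period_q]
  ring

theorem det_eq_one (j : ℤ) : p (j + 1) * q j - p j * q (j + 1) = 1 := by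
  have hper : Function.Periodic (fun j => p (j + 1) * q j - p j * q (j + 1)) N := hF.det_add_N
  have hN : (0 : ℤ) < N := by exact_mod_cast hF.N_pos
  have hmod := hper.sub_int_mul_eq (x := j) (j / N)
  rw [Int.cast_id, show j - j / N * N = j % N by rw [Int.emod_def, mul_comm]] at hmod
  rw [← hmod]
  exact hF.det_eq_one_of_nonneg_of_lt (Int.emod_nonneg j hN.ne') (Int.emod_lt_of_pos j hN)

end IsFarey

theorem nuk_eq_convergent_polynomial_general (Q N : ℕ) (p q : ℤ → ℤ)
    (hF : IsFarey Q N p q) (k : ℕ) (hk : 1 ≤ k)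
    (i : ℤ) :
    nuk p q k i =
      kron2 (2 * k - 1) *
        convK (k - 1) (fun j => (-1) ^ j * nuk p q 2 (i + j - 1)) := by
  obtain ⟨n, rfl⟩ : ∃ n, k = n + 1 := ⟨k - 1, by omega⟩
  rw [nuk_succ_eq_kron2_mul_convK hF.det_eq_one n i, Nat.add_sub_cancel]
  congr 2
  push_cast
  ring

/-- Theorem 1:
`ν_k(γ_i) = (2k-1 / 2) · K_{k-1}(-ν_2(γ_i), ν_2(γ_{i+1}), …, (-1)^{k-1} ν_2(γ_{i+k-2}))`. -/
theorem nuk_eq_convergent_polynomial (Q N : ℕ) (p q : ℤ → ℤ) (hQ : 1 ≤ Q)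
    (hF : IsFarey Q N p q) (k : ℕ) (hk : 1 ≤ k)
    (i : ℤ) (h1 : 1 ≤ i) (h2 : i ≤ (N : ℤ)) :
    nuk p q k i =
      kron2 (2 * k - 1) *
        convK (k - 1) (fun j => (-1) ^ j * nuk p q 2 (i + j - 1)) :=
  nuk_eq_convergent_polynomial_general Q N p q hF k hk i
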